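/- Let q, r, q¹, r¹ : ℝ × ℝ → ℂ be smooth, and let T(λ) = T₁·λ + T₀ where T₁ = [[a10·E + a11·Γ, b10·E + b11·Γ],[c10·E + c11·Γ, d10·E + d11·Γ]] and T₀ = [[a₀·E + a₁·Γ, b₀·E + b₁·Γ],[c₀·E + c₁·Γ, d₀·E + d₁·Γ]] are 4×4 block matrices whose coefficient functions depend on (x,t), with E the 2×2 identity and Γ = [[0,0],[1,0]]. Let F(λ) and F¹(λ) denote the spatial Lax matrices [[−iλE, qE + rΓ],[−conj(q)E − conj(r)Γ, iλE]] built from (q,r) and from (q¹,r¹), respectively. If ∂x T(λ) + T(λ)·F(λ) = F¹(λ)·T(λ) holds for all λ ∈ ℂ and all (x,t), then: b10 = b11 = c10 = c11 = 0; the functions a10, a11, d10, d11 are independent of x (∂x a10 = ∂x a11 = ∂x d10 = ∂x d11 = 0); and moreover −2i·b₀ + q¹·d10 − q·a10 = 0 and −2i·b₁ + r¹·d10 + q¹·d11 − q·a11 − r·a10 = 0. -/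

import Mathlib

/-!
Write `F(λ) = λ Λ + Q` with `Λ = diag(-iE, iE)` and `Q` off-diagonal. Since `T(λ) = λ T₁ + T₀`,
the relation `∂ₓT + T F = F¹ T` is a quadratic polynomial identity in `λ`, so the coefficients of
both sides agree. The `λ²` coefficient says that `T₁` commutes with `Λ`, and commuting with `Λ`
multiplies the off-diagonal blocks by `±2i`, so these vanish. Then `T₁ Q - Q¹ T₁` is off-diagonal,
while `T₀ Λ - Λ T₀` has zero diagonal blocks and upper-right block `2i (b₀ E + b₁ Γ)`. So the `λ`
coefficient gives `∂ₓ T₁ = 0` on the diagonal blocks, and in the upper-right block a matrix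
identity whose `E`- and `Γ`-parts (`Γ² = 0`) are the last two relations.
-/

open Complex

/-- Partial derivative in `x` of a function of `(x,t)`. -/
noncomputable def pX (f : ℝ → ℝ → ℂ) : ℝ → ℝ → ℂ := fun x t => deriv (fun x' => f x' t) x

/-- Entrywise partial derivative in `x` of a matrix-valued function of `(x,t)`. -/
noncomputable def mDX {m : Type*} (M : ℝ → ℝ → Matrix m m ℂ) : ℝ → ℝ → Matrix m m ℂ :=
  fun x t => Matrix.of fun i j => deriv (fun x' => M x' t i j) x

/-- The 2×2 identity matrix `E`. -/
def matE : Matrix (Fin 2) (Fin 2) ℂ := 1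

/-- The nilpotent matrix `Γ = [[0,0],[1,0]]`. -/
def matΓ : Matrix (Fin 2) (Fin 2) ℂ := !![0, 0; 1, 0]

open Matrix

theorem smul_matE_add_smul_matΓ (a b : ℂ) : a • matE + b • matΓ = !![a, 0; b, a] := by
  ext i j
  fin_cases i <;> fin_cases j <;> simp [matE, matΓ]

theorem smul_matE (c : ℂ) : c • matE = !![c, 0; 0, c] := by
  simpa using smul_matE_add_smul_matΓ c 0

theorem smul_matE_add_smul_matΓ_eq_zero {a b : ℂ} (h : a • matE + b • matΓ = 0) :
    a = 0 ∧ b = 0 := by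
  rw [smul_matE_add_smul_matΓ, ← Matrix.ext_iff] at h
  exact ⟨by simpa using h 0 0, by simpa using h 1 0⟩

theorem coeffs_eq_of_forall_quadratic_eq {M : Type*} [AddCommGroup M] [Module ℂ M]
    {A B C A' B' C' : M}
    (h : ∀ l : ℂ, l ^ 2 • A + l • B + C = l ^ 2 • A' + l • B' + C') :
    A = A' ∧ B = B' ∧ C = C' := by
  have hC : C = C' := by simpa using h 0
  have hA : (2 : ℂ) • A = (2 : ℂ) • A' := by
    linear_combination (norm := module) h 1 + h (-1) - (2 : ℂ) • hC
  have hB : (2 : ℂ) • B = (2 : ℂ) • B' := by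
    linear_combination (norm := module) h 1 - h (-1)
  exact ⟨smul_right_injective M two_ne_zero hA, smul_right_injective M two_ne_zero hB, hC⟩

theorem coeffs_of_forall_intertwining {R : Type*} [Ring R] [Algebra ℂ R]
    {D₁ D₀ T₁ T₀ Λ Q Q' : R}
    (h : ∀ l : ℂ, (l • D₁ + D₀) + (l • T₁ + T₀) * (l • Λ + Q) = (l • Λ + Q') * (l • T₁ + T₀)) :
    T₁ * Λ = Λ * T₁ ∧ D₁ + T₁ * Q + T₀ * Λ = Λ * T₀ + Q' * T₁ ∧ D₀ + T₀ * Q = Q' * T₀ := by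
  refine coeffs_eq_of_forall_quadratic_eq fun l => ?_
  have := h l
  simp only [add_mul, mul_add, smul_mul_assoc, mul_smul_comm] at this
  rw [← sub_eq_zero] at this ⊢
  rw [← this]
  module

theorem mDX_apply {m : Type*} (M : ℝ → ℝ → Matrix m m ℂ) (x t : ℝ) (i j : m) :
    mDX M x t i j = pX (fun x t => M x t i j) x t :=
  rfl

theorem pX_eq_zero_of_forall {f : ℝ → ℝ → ℂ} {t : ℝ} (hf : ∀ x, f x t = 0) (x : ℝ) :
    pX f x t = 0 := by
  simp [pX, hf]

theorem mDX_smul_add {m : Type*} {M₁ M₀ : ℝ → ℝ → Matrix m m ℂ} {x t : ℝ}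
    (h₁ : ∀ i j, DifferentiableAt ℝ (fun x' => M₁ x' t i j) x)
    (h₀ : ∀ i j, DifferentiableAt ℝ (fun x' => M₀ x' t i j) x) (l : ℂ) :
    mDX (fun x t => l • M₁ x t + M₀ x t) x t = l • mDX M₁ x t + mDX M₀ x t := by
  ext i j
  simp only [mDX, of_apply, Matrix.add_apply, Matrix.smul_apply, smul_eq_mul]
  rw [deriv_fun_add ((h₁ i j).const_mul l) (h₀ i j), deriv_const_mul l (h₁ i j)]

theorem coeffs_of_forall_mDX_intertwining {m : Type*} [Fintype m] [DecidableEq m]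
    {T₁ T₀ Q Q' : ℝ → ℝ → Matrix m m ℂ} {Λ : Matrix m m ℂ} {x t : ℝ}
    (h₁ : ∀ i j, DifferentiableAt ℝ (fun x' => T₁ x' t i j) x)
    (h₀ : ∀ i j, DifferentiableAt ℝ (fun x' => T₀ x' t i j) x)
    (h : ∀ l : ℂ, mDX (fun x t => l • T₁ x t + T₀ x t) x t + (l • T₁ x t + T₀ x t) *
      (l • Λ + Q x t) = (l • Λ + Q' x t) * (l • T₁ x t + T₀ x t)) :
    T₁ x t * Λ = Λ * T₁ x t ∧
      mDX T₁ x t + T₁ x t * Q x t + T₀ x t * Λ = Λ * T₀ x t + Q' x t * T₁ x t ∧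
      mDX T₀ x t + T₀ x t * Q x t = Q' x t * T₀ x t :=
  coeffs_of_forall_intertwining fun l => mDX_smul_add h₁ h₀ l ▸ h l

theorem Differentiable.differentiableAt_slice {f : ℝ → ℝ → ℂ}
    (hf : Differentiable ℝ fun p : ℝ × ℝ => f p.1 p.2) (x t : ℝ) :
    DifferentiableAt ℝ (fun x' => f x' t) x :=
  (hf.comp (differentiable_id.prodMk (differentiable_const t))).differentiableAt

theorem differentiableAt_fromBlocks_apply {a₀ a₁ b₀ b₁ c₀ c₁ d₀ d₁ : ℝ → ℝ → ℂ} {x t : ℝ}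
    (hd : ∀ f ∈ [a₀, a₁, b₀, b₁, c₀, c₁, d₀, d₁], DifferentiableAt ℝ (fun x' => f x' t) x)
    (i j : Fin 2 ⊕ Fin 2) :
    DifferentiableAt ℝ (fun x' => fromBlocks (a₀ x' t • matE + a₁ x' t • matΓ)
      (b₀ x' t • matE + b₁ x' t • matΓ) (c₀ x' t • matE + c₁ x' t • matΓ)
      (d₀ x' t • matE + d₁ x' t • matΓ) i j) x := by
  rcases i with i | i <;> rcases j with j | j <;> fin_cases i <;> fin_cases j <;>
    simp only [smul_matE_add_smul_matΓ, fromBlocks_apply₁₁, fromBlocks_apply₁₂,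
      fromBlocks_apply₂₁, fromBlocks_apply₂₂, of_apply, cons_val', cons_val_zero, cons_val_one,
      empty_val', cons_val_fin_one, Fin.zero_eta, Fin.mk_one] <;>
    first | exact differentiableAt_const _ | exact hd _ (by simp)

def laxDiag : Matrix (Fin 2 ⊕ Fin 2) (Fin 2 ⊕ Fin 2) ℂ := fromBlocks (-I • matE) 0 0 (I • matE)

def laxPotential (q r : ℂ) : Matrix (Fin 2 ⊕ Fin 2) (Fin 2 ⊕ Fin 2) ℂ :=
  fromBlocks 0 (q • matE + r • matΓ)
    ((-(starRingEnd ℂ) q) • matE + (-(starRingEnd ℂ) r) • matΓ) 0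

theorem fromBlocks_eq_smul_laxDiag_add_laxPotential (l q r : ℂ) :
    fromBlocks ((-I * l) • matE) (q • matE + r • matΓ)
      ((-(starRingEnd ℂ) q) • matE + (-(starRingEnd ℂ) r) • matΓ) ((I * l) • matE) =
    l • laxDiag + laxPotential q r := by
  rw [laxDiag, laxPotential, fromBlocks_smul, fromBlocks_add]
  simp only [smul_smul, mul_comm l, smul_zero, add_zero, zero_add, neg_mul]

theorem offDiag_eq_zero_of_commute_laxDiag {A B C D : Matrix (Fin 2) (Fin 2) ℂ}
    (h : fromBlocks A B C D * laxDiag = laxDiag * fromBlocks A B C D) : B = 0 ∧ C = 0 := by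
  rw [laxDiag, fromBlocks_multiply, fromBlocks_multiply, fromBlocks_inj] at h
  obtain ⟨-, hB, hC, -⟩ := h
  simp only [matE, mul_zero, zero_mul, zero_add, add_zero, mul_smul_comm, smul_mul_assoc,
    mul_one, one_mul] at hB hC
  have h2I : (2 * I : ℂ) ≠ 0 := by simp
  have hB' : (2 * I) • B = 0 := by linear_combination (norm := module) hB
  have hC' : (2 * I) • C = 0 := by linear_combination (norm := module) -hC
  exact ⟨(smul_eq_zero.1 hB').resolve_left h2I, (smul_eq_zero.1 hC').resolve_left h2I⟩

theorem linear_coeff_apply_of_offDiag_eq_zero {D T₀ : Matrix (Fin 2 ⊕ Fin 2) (Fin 2 ⊕ Fin 2) ℂ}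
    {a₀ a₁ d₀ d₁ q r q' r' : ℂ}
    (h : D + fromBlocks (a₀ • matE + a₁ • matΓ) 0 0 (d₀ • matE + d₁ • matΓ) * laxPotential q r +
      T₀ * laxDiag = laxDiag * T₀ +
      laxPotential q' r' * fromBlocks (a₀ • matE + a₁ • matΓ) 0 0 (d₀ • matE + d₁ • matΓ)) :
    D (.inl 0) (.inl 0) = 0 ∧ D (.inl 1) (.inl 0) = 0 ∧
      D (.inr 0) (.inr 0) = 0 ∧ D (.inr 1) (.inr 0) = 0 ∧
      D (.inl 0) (.inr 0) = -2 * I * T₀ (.inl 0) (.inr 0) + q' * d₀ - q * a₀ ∧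
      D (.inl 1) (.inr 0) =
        -2 * I * T₀ (.inl 1) (.inr 0) + r' * d₀ + q' * d₁ - q * a₁ - r * a₀ := by
  simp only [laxDiag, laxPotential, smul_matE_add_smul_matΓ] at h
  -- only now: `simp` works bottom-up, so `smul_matE` would break up `a • matE + b • matΓ`
  simp only [smul_matE] at h
  have e := fun i j => congrFun (congrFun h i) j
  have e₁ := e (.inl 0) (.inl 0)
  have e₂ := e (.inl 1) (.inl 0)
  have e₃ := e (.inr 0) (.inr 0)
  have e₄ := e (.inr 1) (.inr 0)
  have e₅ := e (.inl 0) (.inr 0)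
  have e₆ := e (.inl 1) (.inr 0)
  simp only [Matrix.add_apply, mul_apply, Fintype.sum_sum_type, Fin.sum_univ_two,
    fromBlocks_apply₁₁, fromBlocks_apply₁₂, fromBlocks_apply₂₁, fromBlocks_apply₂₂, of_apply,
    cons_val', cons_val_zero, cons_val_one, empty_val', cons_val_fin_one, Matrix.zero_apply,
    mul_zero, zero_mul, add_zero, zero_add] at e₁ e₂ e₃ e₄ e₅ e₆
  refine ⟨?_, ?_, ?_, ?_, ?_, ?_⟩
  · linear_combination e₁
  · linear_combination e₂
  · linear_combination e₃
  · linear_combination e₄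
  · linear_combination e₅
  · linear_combination e₆

theorem statement7 (q r q1 r1 : ℝ → ℝ → ℂ)
    (a10 a11 b10 b11 c10 c11 d10 d11 a0 a1 b0 b1 c0 c1 d0 d1 : ℝ → ℝ → ℂ)
    (hdiff : ∀ f ∈ ([a10, a11, b10, b11, c10, c11, d10, d11,
                     a0, a1, b0, b1, c0, c1, d0, d1] : List (ℝ → ℝ → ℂ)),
      Differentiable ℝ (fun p : ℝ × ℝ => f p.1 p.2))
    (T1 T0 : ℝ → ℝ → Matrix (Fin 2 ⊕ Fin 2) (Fin 2 ⊕ Fin 2) ℂ)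
    (hT1 : ∀ x t : ℝ, T1 x t = Matrix.fromBlocks
      (a10 x t • matE + a11 x t • matΓ) (b10 x t • matE + b11 x t • matΓ)
      (c10 x t • matE + c11 x t • matΓ) (d10 x t • matE + d11 x t • matΓ))
    (hT0 : ∀ x t : ℝ, T0 x t = Matrix.fromBlocks
      (a0 x t • matE + a1 x t • matΓ) (b0 x t • matE + b1 x t • matΓ)
      (c0 x t • matE + c1 x t • matΓ) (d0 x t • matE + d1 x t • matΓ))
    (T : ℂ → ℝ → ℝ → Matrix (Fin 2 ⊕ Fin 2) (Fin 2 ⊕ Fin 2) ℂ)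
    (hT : ∀ (l : ℂ) (x t : ℝ), T l x t = l • T1 x t + T0 x t)
    (F F1 : ℂ → ℝ → ℝ → Matrix (Fin 2 ⊕ Fin 2) (Fin 2 ⊕ Fin 2) ℂ)
    (hF : ∀ (l : ℂ) (x t : ℝ), F l x t = Matrix.fromBlocks
      ((-I * l) • matE)
      (q x t • matE + r x t • matΓ)
      ((-(starRingEnd ℂ) (q x t)) • matE + (-(starRingEnd ℂ) (r x t)) • matΓ)
      ((I * l) • matE))
    (hF1 : ∀ (l : ℂ) (x t : ℝ), F1 l x t = Matrix.fromBlocks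
      ((-I * l) • matE)
      (q1 x t • matE + r1 x t • matΓ)
      ((-(starRingEnd ℂ) (q1 x t)) • matE + (-(starRingEnd ℂ) (r1 x t)) • matΓ)
      ((I * l) • matE))
    (hDarboux : ∀ (l : ℂ) (x t : ℝ),
      mDX (T l) x t + T l x t * F l x t = F1 l x t * T l x t) :
    ∀ x t : ℝ,
      (b10 x t = 0 ∧ b11 x t = 0 ∧ c10 x t = 0 ∧ c11 x t = 0)
      ∧ (pX a10 x t = 0 ∧ pX a11 x t = 0 ∧ pX d10 x t = 0 ∧ pX d11 x t = 0)
      ∧ (-2 * I * b0 x t + q1 x t * d10 x t - q x t * a10 x t = 0)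
      ∧ (-2 * I * b1 x t + r1 x t * d10 x t + q1 x t * d11 x t
          - q x t * a11 x t - r x t * a10 x t = 0) := by
  have hcoeff (x t : ℝ) := by
    have hd (f) (hf : f ∈ _) := (hdiff f hf).differentiableAt_slice x t
    have hdT1 : ∀ i j, DifferentiableAt ℝ (fun x' => T1 x' t i j) x := by
      simpa only [hT1] using differentiableAt_fromBlocks_apply fun f hf =>
        hd f (List.mem_append_left [a0, a1, b0, b1, c0, c1, d0, d1] hf)
    have hdT0 : ∀ i j, DifferentiableAt ℝ (fun x' => T0 x' t i j) x := by
      simpa only [hT0] using differentiableAt_fromBlocks_apply fun f hf =>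
        hd f (List.mem_append_right [a10, a11, b10, b11, c10, c11, d10, d11] hf)
    refine coeffs_of_forall_mDX_intertwining (Λ := laxDiag)
      (Q := fun x t => laxPotential (q x t) (r x t))
      (Q' := fun x t => laxPotential (q1 x t) (r1 x t)) hdT1 hdT0 fun l => ?_
    simpa only [← funext₂ (hT l), hT, hF, hF1, fromBlocks_eq_smul_laxDiag_add_laxPotential]
      using hDarboux l x t
  have hoff (x t : ℝ) : b10 x t = 0 ∧ b11 x t = 0 ∧ c10 x t = 0 ∧ c11 x t = 0 := by
    obtain ⟨hB, hC⟩ := offDiag_eq_zero_of_commute_laxDiag (hT1 x t ▸ (hcoeff x t).1)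
    exact ⟨(smul_matE_add_smul_matΓ_eq_zero hB).1, (smul_matE_add_smul_matΓ_eq_zero hB).2,
      (smul_matE_add_smul_matΓ_eq_zero hC).1, (smul_matE_add_smul_matΓ_eq_zero hC).2⟩
  intro x t
  obtain ⟨hb10, hb11, hc10, hc11⟩ := hoff x t
  have h1 := (hcoeff x t).2.1
  simp only [hT1 x t, hb10, hb11, hc10, hc11, zero_smul, add_zero] at h1
  obtain ⟨ha10, ha11, hd10, hd11, hb0, hb1⟩ := linear_coeff_apply_of_offDiag_eq_zero h1
  simp only [mDX_apply, hT1, hT0, smul_matE_add_smul_matΓ, fromBlocks_apply₁₁, fromBlocks_apply₁₂,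
    fromBlocks_apply₂₂, of_apply, cons_val', cons_val_zero, cons_val_one, empty_val',
    cons_val_fin_one, pX_eq_zero_of_forall fun x => (hoff x t).1,
    pX_eq_zero_of_forall fun x => (hoff x t).2.1] at ha10 ha11 hd10 hd11 hb0 hb1
  exact ⟨⟨hb10, hb11, hc10, hc11⟩, ⟨ha10, ha11, hd10, hd11⟩, hb0.symm, hb1.symm⟩
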